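/- Let D be a complete, cocomplete, extremally co-well-powered, (extremal epi, mono) category. Then QD is extremally co-well-powered. -/

import Mathlib

open CategoryTheory CategoryTheory.Limits

universe w v u v₂ u₂

namespace FilteredCats

variable {D : Type u} [Category.{v} D]

/-- The class of morphisms of `D` with source `X`. -/
def MorFrom (X : D) : Type (max u v) := Σ Y : D, X ⟶ Y

/-- `Dom δ₁ δ₂` means `δ₁ ≥ δ₂`: there is `h` with `h ∘ δ₁ = δ₂`. -/
def Dom {X : D} (δ₁ δ₂ : MorFrom X) : Prop :=
  ∃ h : δ₁.1 ⟶ δ₂.1, δ₁.2 ≫ h = δ₂.2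

/-- A projective filtration on `X`: a nonempty, directed, saturated class of
morphisms with source `X`. -/
structure ProjFilt (X : D) where
  carrier : Set (MorFrom X)
  nonempty' : carrier.Nonempty
  directed' : ∀ δ₁ ∈ carrier, ∀ δ₂ ∈ carrier, ∃ δ ∈ carrier, Dom δ δ₁ ∧ Dom δ δ₂
  saturated' : ∀ δ₁ ∈ carrier, ∀ δ₂, Dom δ₁ δ₂ → δ₂ ∈ carrier

/-- The pull back of a set of morphisms with source `X` along `f : X' ⟶ X`. -/
def pullSet {X' X : D} (f : X' ⟶ X) (S : Set (MorFrom X)) : Set (MorFrom X') :=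
  {δ' | ∃ δ ∈ S, δ' = ⟨δ.1, f ≫ δ.2⟩}

/-- The pull back of a projective filtration along `f : X' ⟶ X`. -/
def ProjFilt.pull {X' X : D} (f : X' ⟶ X) (P : ProjFilt X) : ProjFilt X' where
  carrier := pullSet f P.carrier
  nonempty' := by
    obtain ⟨δ, hδ⟩ := P.nonempty'
    exact ⟨⟨δ.1, f ≫ δ.2⟩, δ, hδ, rfl⟩
  directed' := by
    rintro _ ⟨δ₁, h₁, rfl⟩ _ ⟨δ₂, h₂, rfl⟩
    obtain ⟨δ, hδ, ⟨g₁, hg₁⟩, ⟨g₂, hg₂⟩⟩ := P.directed' δ₁ h₁ δ₂ h₂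
    exact ⟨⟨δ.1, f ≫ δ.2⟩, ⟨δ, hδ, rfl⟩,
      ⟨g₁, by simp [hg₁]⟩, ⟨g₂, by simp [hg₂]⟩⟩
  saturated' := by
    rintro _ ⟨δ, hδ, rfl⟩ δ₂ ⟨h, hh⟩
    refine ⟨⟨δ₂.1, δ.2 ≫ h⟩, P.saturated' δ hδ _ ⟨h, rfl⟩, ?_⟩
    obtain ⟨Y₂, g₂⟩ := δ₂
    have hg : g₂ = f ≫ (δ.2 ≫ h) := by simpa using hh.symm
    exact Sigma.ext rfl (heq_of_eq hg)

/-- A projectively filtered object of `D`. -/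
structure PObj (D : Type u) [Category.{v} D] where
  base : D
  filt : ProjFilt base

/-- A morphism of projectively filtered objects: a morphism of the underlying
objects such that the pull back of the target filtration is contained in the
source filtration. -/
structure PHom (A B : PObj D) : Type v where
  toHom : A.base ⟶ B.base
  mem : ∀ δ ∈ B.filt.carrier, (⟨δ.1, toHom ≫ δ.2⟩ : MorFrom A.base) ∈ A.filt.carrier

theorem PHom.ext' {A B : PObj D} {f g : PHom A B} (h : f.toHom = g.toHom) : f = g := by
  cases f; cases g; cases h; rfl

instance : Category.{v} (PObj D) where
  Hom := PHom
  id A := ⟨𝟙 A.base, fun δ hδ => by rw [Category.id_comp]; exact hδ⟩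
  comp {A B C} f g := ⟨f.toHom ≫ g.toHom, fun δ hδ => by
    have h1 := g.mem δ hδ
    have h2 := f.mem _ h1
    simpa using h2⟩
  id_comp f := PHom.ext' (Category.id_comp _)
  comp_id f := PHom.ext' (Category.comp_id _)
  assoc f g h := PHom.ext' (Category.assoc _ _ _)

@[simp] theorem PObj.id_toHom (A : PObj D) : PHom.toHom (𝟙 A) = 𝟙 A.base := rfl
@[simp] theorem PObj.comp_toHom {A B C : PObj D} (f : A ⟶ B) (g : B ⟶ C) :
    PHom.toHom (f ≫ g) = PHom.toHom f ≫ PHom.toHom g := rfl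

/-- The forgetful functor `PD → D`. -/
def Pforget (D : Type u) [Category.{v} D] : PObj D ⥤ D where
  obj A := A.base
  map f := PHom.toHom f

/-- The discrete filtration functor `D → PD`, `X ↦ (X, M(X))`. -/
def Pdiscrete (D : Type u) [Category.{v} D] : D ⥤ PObj D where
  obj X :=
    { base := X
      filt :=
        { carrier := Set.univ
          nonempty' := ⟨⟨X, 𝟙 X⟩, trivial⟩
          directed' := fun δ₁ _ δ₂ _ =>
            ⟨⟨X, 𝟙 X⟩, trivial, ⟨δ₁.2, Category.id_comp _⟩, ⟨δ₂.2, Category.id_comp _⟩⟩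
          saturated' := fun _ _ _ _ => trivial } }
  map f := ⟨f, fun _ _ => trivial⟩

/-- The functor `PD → PE` induced by a functor `G : D → E`. -/
def Pfunctor {E : Type u₂} [Category.{v₂} E] (G : D ⥤ E) : PObj D ⥤ PObj E where
  obj A :=
    { base := G.obj A.base
      filt :=
        { carrier := {δ' | ∃ δ ∈ A.filt.carrier,
            Dom (⟨G.obj δ.1, G.map δ.2⟩ : MorFrom (G.obj A.base)) δ'}
          nonempty' := by
            obtain ⟨δ, hδ⟩ := A.filt.nonempty'
            exact ⟨⟨G.obj δ.1, G.map δ.2⟩, δ, hδ, ⟨𝟙 _, Category.comp_id _⟩⟩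
          directed' := by
            rintro δ'₁ ⟨δ₁, h₁, g₁, hg₁⟩ δ'₂ ⟨δ₂, h₂, g₂, hg₂⟩
            obtain ⟨δ, hδ, ⟨k₁, hk₁⟩, ⟨k₂, hk₂⟩⟩ := A.filt.directed' δ₁ h₁ δ₂ h₂
            refine ⟨⟨G.obj δ.1, G.map δ.2⟩, ⟨δ, hδ, ⟨𝟙 _, Category.comp_id _⟩⟩,
              ⟨G.map k₁ ≫ g₁, ?_⟩, ⟨G.map k₂ ≫ g₂, ?_⟩⟩
            · rw [← Category.assoc, ← G.map_comp, hk₁, hg₁]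
            · rw [← Category.assoc, ← G.map_comp, hk₂, hg₂]
          saturated' := by
            rintro δ'₁ ⟨δ, hδ, g, hg⟩ δ'₂ ⟨h, hh⟩
            exact ⟨δ, hδ, ⟨g ≫ h, by rw [← Category.assoc, hg, hh]⟩⟩ } }
  map {A B} f :=
    ⟨G.map (PHom.toHom f), by
      rintro δ' ⟨δ, hδ, g, hg⟩
      exact ⟨⟨δ.1, PHom.toHom f ≫ δ.2⟩, f.mem δ hδ,
        ⟨g, by rw [← hg, ← Category.assoc, ← G.map_comp]⟩⟩⟩
  map_id A := PHom.ext' (G.map_id _)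
  map_comp f g := PHom.ext' (G.map_comp _ _)

/-- An extremal epimorphism: an epimorphism such that in any factorisation
through a monomorphism, the monomorphism is an isomorphism. -/
def ExtremalEpi {C : Type u₂} [Category.{v₂} C] {X Y : C} (e : X ⟶ Y) : Prop :=
  Epi e ∧ ∀ ⦃Z : C⦄ (g : X ⟶ Z) (m : Z ⟶ Y), Mono m → g ≫ m = e → IsIso m

/-- An (extremal epi, mono) category: every morphism factors as an extremal
epimorphism followed by a monomorphism and such factorisations have the
diagonal fill-in property. -/
structure EMCat (C : Type u₂) [Category.{v₂} C] : Prop where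
  fact : ∀ {X Y : C} (f : X ⟶ Y), ∃ (Z : C) (e : X ⟶ Z) (m : Z ⟶ Y),
    ExtremalEpi e ∧ Mono m ∧ e ≫ m = f
  diag : ∀ {A B Z X : C} (e : A ⟶ B) (m : Z ⟶ X) (g : A ⟶ Z) (h : B ⟶ X),
    ExtremalEpi e → Mono m → g ≫ m = e ≫ h → ∃ d : B ⟶ Z, e ≫ d = g ∧ d ≫ m = h

/-- A projective filtration is reduced if it has an initial subclass of
extremal epimorphisms. -/
def ProjFilt.Reduced {X : D} (P : ProjFilt X) : Prop :=
  ∀ δ ∈ P.carrier, ∃ ε ∈ P.carrier, ExtremalEpi ε.2 ∧ Dom ε δ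

/-- The category of reduced projectively filtered objects of `D`. -/
def QObj (D : Type u) [Category.{v} D] := ObjectProperty.FullSubcategory (fun A : PObj D => A.filt.Reduced)

instance : Category.{v} (QObj D) := ObjectProperty.FullSubcategory.category _

/-- The inclusion functor `QD → PD`. -/
def qpInclusion (D : Type u) [Category.{v} D] : QObj D ⥤ PObj D :=
  ObjectProperty.ι _

/-- A category is extremally co-well-powered if every object has, up to
isomorphism, only a (small) set of extremal epimorphisms out of it. -/
def ECWP (C : Type u₂) [Category.{v₂} C] : Prop :=
  ∀ X : C, ∃ (ι : Type v₂) (Y : ι → C) (e : ∀ i, X ⟶ Y i),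
    (∀ i, ExtremalEpi (e i)) ∧
    ∀ ⦃Z : C⦄ (f : X ⟶ Z), ExtremalEpi f → ∃ (i : ι) (φ : Y i ≅ Z), e i ≫ φ.hom = f

/-- The category `(P, D)` associated to a projective filtration: objects are the
elements of `P`, morphisms `δ₁ → δ₂` are morphisms `g` of `D` with `g ∘ δ₁ = δ₂`. -/
def FiltCat {X : D} (P : ProjFilt X) : Type (max u v) := {δ : MorFrom X // δ ∈ P.carrier}

instance {X : D} (P : ProjFilt X) : Category.{v} (FiltCat P) where
  Hom δ₁ δ₂ := {g : δ₁.1.1 ⟶ δ₂.1.1 // δ₁.1.2 ≫ g = δ₂.1.2}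
  id δ := ⟨𝟙 _, Category.comp_id _⟩
  comp f g := ⟨f.1 ≫ g.1, by rw [← Category.assoc, f.2, g.2]⟩
  id_comp f := Subtype.ext (Category.id_comp _)
  comp_id f := Subtype.ext (Category.comp_id _)
  assoc f g h := Subtype.ext (Category.assoc _ _ _)

/-- The functor `(P, D) → D` sending an element of the filtration to its target. -/
def FiltDiagram {X : D} (P : ProjFilt X) : FiltCat P ⥤ D where
  obj δ := δ.1.1
  map g := g.1

/-- The canonical cone on the diagram of a projective filtration, with apex the
underlying object. -/
def filtCone {X : D} (P : ProjFilt X) : Limits.Cone (FiltDiagram P) where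
  pt := X
  π :=
    { app := fun δ => δ.1.2
      naturality := fun δ₁ δ₂ g => by
        have := g.2
        dsimp [FiltDiagram] at *
        simp [this] }

/-- A reduced projective filtration is an iso-filtration if the canonical cone
on its diagram is a limit cone, i.e. the limit exists and the canonical morphism
from the underlying object to it is an isomorphism. -/
def IsoFilt {X : D} (P : ProjFilt X) : Prop :=
  Nonempty (Limits.IsLimit (filtCone P))

/-- The category of iso-filtered objects of `D`. -/
def KObj (D : Type u) [Category.{v} D] :=
  ObjectProperty.FullSubcategory (fun A : QObj D => IsoFilt A.obj.filt)

instance : Category.{v} (KObj D) := ObjectProperty.FullSubcategory.category _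

/-- The inclusion functor `KD → QD`. -/
def kqInclusion (D : Type u) [Category.{v} D] : KObj D ⥤ QObj D :=
  ObjectProperty.ι _

/-- The forgetful functor `KD → D`. -/
def Kforget (D : Type u) [Category.{v} D] : KObj D ⥤ D :=
  kqInclusion D ⋙ qpInclusion D ⋙ Pforget D

/-- The smallest projective filtration containing a class of morphisms
(as a class). -/
def genSet {X : D} (S : Set (MorFrom X)) : Set (MorFrom X) :=
  {δ | ∀ P : ProjFilt X, S ⊆ P.carrier → δ ∈ P.carrier}

/-- The reduction of a class of morphisms: the saturation of the class of
extremal epimorphism parts of (extremal epi, mono)-factorisations of its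
elements. -/
def redSet {X : D} (S : Set (MorFrom X)) : Set (MorFrom X) :=
  {δ | ∃ ε : MorFrom X, ExtremalEpi ε.2 ∧
    (∃ δ' ∈ S, ∃ m : ε.1 ⟶ δ'.1, Mono m ∧ ε.2 ≫ m = δ'.2) ∧ Dom ε δ}

/-- The push forward of a filtration class along `f` (single morphism case). -/
def pushSet {X Y : D} (f : X ⟶ Y) (S : Set (MorFrom X)) : Set (MorFrom Y) :=
  {g | (⟨g.1, f ≫ g.2⟩ : MorFrom X) ∈ S}

/-- The discrete filtration on an object, as an iso-filtered object. -/
def kDiscreteObj (X : D) : KObj D where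
  obj :=
    { obj := (Pdiscrete D).obj X
      property := fun δ _ => ⟨⟨X, 𝟙 X⟩, trivial,
        ⟨(inferInstance : Epi (𝟙 X)), fun _ g m hm hgm => by
          haveI : IsSplitEpi m := ⟨⟨⟨g, hgm⟩⟩⟩
          exact isIso_of_mono_of_isSplitEpi m⟩,
        ⟨δ.2, Category.id_comp _⟩⟩ }
  property := ⟨{
    lift := fun c => c.π.app ⟨⟨X, 𝟙 X⟩, trivial⟩
    fac := fun c j => by
      have h := c.π.naturality (X := ⟨⟨X, 𝟙 X⟩, trivial⟩) (Y := j)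
        ⟨j.1.2, Category.id_comp _⟩
      dsimp [FiltDiagram, filtCone] at h ⊢
      exact h.symm.trans (Category.id_comp _)
    uniq := fun c m hm => by
      have h := hm ⟨⟨X, 𝟙 X⟩, trivial⟩
      rw [← Category.comp_id m]
      exact h }⟩

/-- The discrete filtration functor `D → KD`. -/
def kDiscrete (D : Type u) [Category.{v} D] : D ⥤ KObj D where
  obj X := kDiscreteObj X
  map f := ⟨f, fun _ _ => trivial⟩
  map_id _ := rfl
  map_comp _ _ := rfl

/-- The morphism in `KD` from an iso-filtered object to the discrete object on
the target of an element of its filtration. -/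
def kToDiscrete {A : KObj D} (δ : MorFrom A.obj.obj.base)
    (hδ : δ ∈ A.obj.obj.filt.carrier) : A ⟶ kDiscreteObj δ.1 :=
  ⟨⟨show PHom A.obj.obj ((kDiscreteObj δ.1).obj.obj) from
    ⟨δ.2, fun γ _ => A.obj.obj.filt.saturated' δ hδ _ ⟨γ.2, rfl⟩⟩⟩⟩

/-- The natural transformation `P(G) → P(H)` induced by `ν : G → H`. -/
def Pnat {E : Type u₂} [Category.{v₂} E] {G H : D ⥤ E} (ν : G ⟶ H) :
    Pfunctor G ⟶ Pfunctor H where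
  app A :=
    ⟨ν.app A.base, by
      rintro δ' ⟨δ, hδ, g, hg⟩
      exact ⟨δ, hδ, ⟨ν.app δ.1 ≫ g, by
        rw [← Category.assoc, ν.naturality, Category.assoc, hg]; rfl⟩⟩⟩
  naturality {A B} f := PHom.ext' (ν.naturality (PHom.toHom f))


/-!
An extremal epimorphism `f : (X, P) ⟶ (Y, Q)` of `QD` is determined by its underlying morphism
`u`. Whenever `u = e ≫ m` in `D` with `m` mono, the push forward `S(e, P) = {g | e ≫ g ∈ P}` is
again a reduced projective filtration (directed thanks to binary products, reduced thanks to the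
diagonal fill-in), and `f` factors in `QD` through `(Z, S(e, P))` followed by a monomorphism with
underlying map `m`, which must therefore be an isomorphism. For the (extremal epi, mono)
factorisation of `u` this makes `u` an extremal epimorphism of `D`, so `u ≅ e` for one of the
chosen representatives `e` of the extremal quotients of `X`; taking `m` to be that isomorphism
gives `f ≅ ((X, P) ⟶ (Y', S(e, P)))`. These form a set, indexed by a subset of the
representatives.
-/

theorem ExtremalEpi.comp_isIso {C : Type u₂} [Category.{v₂} C] {X Y Z : C} {e : X ⟶ Y}
    (he : ExtremalEpi e) (m : Y ⟶ Z) [IsIso m] : ExtremalEpi (e ≫ m) := by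
  have : Epi e := he.1
  refine ⟨epi_comp e m, fun W g n _ hgn => ?_⟩
  have : IsIso (n ≫ inv m) := he.2 g (n ≫ inv m) inferInstance (by simp [reassoc_of% hgn])
  simpa using (inferInstance : IsIso ((n ≫ inv m) ≫ m))

theorem ProjFilt.Reduced.mem_of_comp_mono (hEM : EMCat D) {X : D} {P : ProjFilt X}
    (hred : P.Reduced) {E T : D} (δ : X ⟶ E) (μ : E ⟶ T) [Mono μ]
    (h : (⟨T, δ ≫ μ⟩ : MorFrom X) ∈ P.carrier) : (⟨E, δ⟩ : MorFrom X) ∈ P.carrier := by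
  obtain ⟨ε, hε, hεext, k, hk⟩ := hred _ h
  obtain ⟨d, hd, -⟩ := hEM.diag ε.2 μ δ k hεext inferInstance hk.symm
  exact P.saturated' ε hε _ ⟨d, hd⟩

section Push

variable [HasBinaryProducts D]

theorem ProjFilt.lift_mem {X : D} (P : ProjFilt X) {T₁ T₂ : D} {δ₁ : X ⟶ T₁} {δ₂ : X ⟶ T₂}
    (h₁ : (⟨T₁, δ₁⟩ : MorFrom X) ∈ P.carrier) (h₂ : (⟨T₂, δ₂⟩ : MorFrom X) ∈ P.carrier) :
    (⟨T₁ ⨯ T₂, prod.lift δ₁ δ₂⟩ : MorFrom X) ∈ P.carrier := by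
  obtain ⟨δ, hδ, ⟨k₁, hk₁⟩, ⟨k₂, hk₂⟩⟩ := P.directed' _ h₁ _ h₂
  exact P.saturated' δ hδ _ ⟨prod.lift k₁ k₂, by ext <;> simp [hk₁, hk₂]⟩

def ProjFilt.push {X Y : D} (P : ProjFilt X) (u : X ⟶ Y)
    (hne : (pushSet u P.carrier).Nonempty) : ProjFilt Y where
  carrier := pushSet u P.carrier
  nonempty' := hne
  directed' := by
    rintro ⟨T₁, g₁⟩ h₁ ⟨T₂, g₂⟩ h₂
    refine ⟨⟨T₁ ⨯ T₂, prod.lift g₁ g₂⟩, ?_, ⟨prod.fst, prod.lift_fst _ _⟩,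
      ⟨prod.snd, prod.lift_snd _ _⟩⟩
    change (⟨_, u ≫ prod.lift g₁ g₂⟩ : MorFrom X) ∈ P.carrier
    rw [prod.comp_lift]
    exact P.lift_mem h₁ h₂
  saturated' := by
    rintro δ₁ h₁ δ₂ ⟨h, hh⟩
    exact P.saturated' _ h₁ _ ⟨h, by rw [Category.assoc, hh]⟩

theorem ProjFilt.Reduced.push (hEM : EMCat D) {X Y : D} {P : ProjFilt X} (hred : P.Reduced)
    (u : X ⟶ Y) (hne : (pushSet u P.carrier).Nonempty) : (P.push u hne).Reduced := by
  rintro ⟨T, g⟩ hg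
  obtain ⟨E, ε, μ, hε, hμ, rfl⟩ := hEM.fact g
  have hmem : (⟨T, (u ≫ ε) ≫ μ⟩ : MorFrom X) ∈ P.carrier := by rw [Category.assoc]; exact hg
  exact ⟨⟨E, ε⟩, hred.mem_of_comp_mono hEM (u ≫ ε) μ hmem, hε, ⟨μ, rfl⟩⟩

def QObj.push (hEM : EMCat D) (A : QObj D) {Y : D} (u : A.obj.base ⟶ Y)
    (hne : (pushSet u A.obj.filt.carrier).Nonempty) : QObj D :=
  ⟨⟨Y, A.obj.filt.push u hne⟩, A.property.push hEM u hne⟩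

end Push

namespace QObj

def homMk {A B : QObj D} (u : A.obj.base ⟶ B.obj.base)
    (hu : B.obj.filt.carrier ⊆ pushSet u A.obj.filt.carrier) : A ⟶ B :=
  ObjectProperty.homMk ⟨u, hu⟩

theorem hom_ext {A B : QObj D} {f g : A ⟶ B} (h : f.hom.toHom = g.hom.toHom) : f = g :=
  InducedCategory.hom_ext (PHom.ext' h)

instance : (qpInclusion D ⋙ Pforget D).Faithful where
  map_injective h := hom_ext h

theorem subset_pushSet_of_fac {A B : QObj D} (f : A ⟶ B) {Y : D} {u : A.obj.base ⟶ Y}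
    {m : Y ⟶ B.obj.base} (hfac : u ≫ m = f.hom.toHom) :
    B.obj.filt.carrier ⊆ pushSet m (pushSet u A.obj.filt.carrier) := fun δ hδ => by
  change (⟨δ.1, u ≫ m ≫ δ.2⟩ : MorFrom A.obj.base) ∈ A.obj.filt.carrier
  rw [← Category.assoc, hfac]
  exact f.hom.mem δ hδ

theorem pushSet_nonempty_of_fac {A B : QObj D} (f : A ⟶ B) {Y : D} {u : A.obj.base ⟶ Y}
    {m : Y ⟶ B.obj.base} (hfac : u ≫ m = f.hom.toHom) :
    (pushSet u A.obj.filt.carrier).Nonempty :=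
  B.obj.filt.nonempty'.image _ |>.mono (Set.image_subset_iff.2 (subset_pushSet_of_fac f hfac))

variable [HasBinaryProducts D] (hEM : EMCat D)

def toPush (A : QObj D) {Y : D} (u : A.obj.base ⟶ Y)
    (hne : (pushSet u A.obj.filt.carrier).Nonempty) : A ⟶ A.push hEM u hne :=
  homMk u subset_rfl

def pushLift {A B : QObj D} (f : A ⟶ B) {Y : D} (u : A.obj.base ⟶ Y) (m : Y ⟶ B.obj.base)
    (hfac : u ≫ m = f.hom.toHom) : A.push hEM u (pushSet_nonempty_of_fac f hfac) ⟶ B :=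
  homMk m (subset_pushSet_of_fac f hfac)

theorem toPush_pushLift {A B : QObj D} (f : A ⟶ B) {Y : D} (u : A.obj.base ⟶ Y)
    (m : Y ⟶ B.obj.base) (hfac : u ≫ m = f.hom.toHom) :
    toPush hEM A u _ ≫ pushLift hEM f u m hfac = f :=
  hom_ext hfac

theorem isIso_pushLift {A B : QObj D} {f : A ⟶ B} (hf : ExtremalEpi f) {Y : D}
    (u : A.obj.base ⟶ Y) (m : Y ⟶ B.obj.base) [Mono m] (hfac : u ≫ m = f.hom.toHom) :
    IsIso (pushLift hEM f u m hfac) :=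
  have : Mono (pushLift hEM f u m hfac) :=
    (qpInclusion D ⋙ Pforget D).mono_of_mono_map (inferInstanceAs (Mono m))
  hf.2 _ _ this (toPush_pushLift hEM f u m hfac)

include hEM in
theorem extremalEpi_toHom {A B : QObj D} {f : A ⟶ B} (hf : ExtremalEpi f) :
    ExtremalEpi f.hom.toHom := by
  obtain ⟨Z, e, m, he, hm, hfac⟩ := hEM.fact f.hom.toHom
  have := isIso_pushLift hEM hf e m hfac
  have : IsIso m := (qpInclusion D ⋙ Pforget D).map_isIso (pushLift hEM f e m hfac)
  rw [← hfac]
  exact he.comp_isIso m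

end QObj

theorem qobj_ecwp_general [Limits.HasLimits D]
    (hecwp : ECWP D) (hEM : EMCat D) :
    ECWP (QObj D) := by
  intro A
  obtain ⟨ι, Y, e, -, hcov⟩ := hecwp A.obj.base
  refine ⟨{i : ι // ∃ hne, ExtremalEpi (QObj.toPush hEM A (e i) hne)},
    fun i => A.push hEM (e i.1) i.2.choose, fun i => QObj.toPush hEM A (e i.1) i.2.choose,
    fun i => i.2.choose_spec, fun B f hf => ?_⟩
  obtain ⟨i, φ, hφ⟩ := hcov f.hom.toHom (QObj.extremalEpi_toHom hEM hf)
  have hne := QObj.pushSet_nonempty_of_fac f hφ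
  let ψ := QObj.pushLift hEM f (e i) φ.hom hφ
  have : IsIso ψ := QObj.isIso_pushLift hEM hf (e i) φ.hom hφ
  have hfac : QObj.toPush hEM A (e i) hne ≫ ψ = f := QObj.toPush_pushLift hEM f (e i) φ.hom hφ
  have hext : ExtremalEpi (QObj.toPush hEM A (e i) hne) := by
    simpa [← hfac] using hf.comp_isIso (inv ψ)
  exact ⟨⟨i, hne, hext⟩, asIso ψ, hfac⟩

/-- `QD` is extremally co-well-powered. -/
theorem qobj_ecwp [Limits.HasLimits D] [Limits.HasColimits D]
    (hecwp : ECWP D) (hEM : EMCat D) :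
    ECWP (QObj D) :=
  qobj_ecwp_general hecwp hEM

end FilteredCats
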